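/- Let S have (p,δ)-structure with characteristics (κ₀, κ₁, p) for some p ∈ (1,∞) and δ ≥ 0. Then there exist constants c, C > 0 depending only on the characteristics (κ₀, κ₁, p) of S such that for all P, Q ∈ ℝ^{3×3}: c·φ'_{|P^sym|}(|P^sym − Q^sym|) ≤ |S(P) − S(Q)| ≤ C·φ'_{|P^sym|}(|P^sym − Q^sym|), where φ'_a denotes the derivative of the shifted N-function φ_a of φ = φ_{p,δ}. -/

import Mathlib

noncomputable section

open Matrix

attribute [local instance] Matrix.normedAddCommGroup Matrix.normedSpace

/-- 3×3 real matrices. -/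
abbrev Mat3 := Matrix (Fin 3) (Fin 3) ℝ

/-- The symmetric part `P^sym = (P + Pᵀ)/2` of a matrix. -/
def msym (P : Mat3) : Mat3 := (1 / 2 : ℝ) • (P + Pᵀ)

/-- The scalar product of tensors `A·B = Σ_{i,j} A_{ij} B_{ij}`. -/
def mdot (A B : Mat3) : ℝ := ∑ i, ∑ j, A i j * B i j

/-- The Euclidean (Frobenius) norm `|A| = √(A·A)`. -/
def mnorm (A : Mat3) : ℝ := Real.sqrt (mdot A A)

/-- The N-function `φ_{p,δ}(t) = ∫₀ᵗ (δ+s)^{p-2} s ds`. -/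
def phi (p δ t : ℝ) : ℝ := ∫ s in (0:ℝ)..t, (δ + s) ^ (p - 2) * s

/-- Its first derivative `φ'(t) = (δ+t)^{p-2} t`. -/
def phi' (p δ t : ℝ) : ℝ := (δ + t) ^ (p - 2) * t

/-- Its second derivative `φ''(t) = (p-2)(δ+t)^{p-3} t + (δ+t)^{p-2}` (for `t > 0`). -/
def phi'' (p δ t : ℝ) : ℝ := (p - 2) * (δ + t) ^ (p - 3) * t + (δ + t) ^ (p - 2)

/-- The partial derivative `∂_{kl} S_{ij}(P)` of the `(i,j)` component of `S`
with respect to the `(k,l)` matrix entry. -/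
def DS (S : Mat3 → Mat3) (P : Mat3) (k l i j : Fin 3) : ℝ :=
  fderiv ℝ S P (Matrix.single k l 1) i j

/-- A tensor field `S` has `(p,δ)`-structure with characteristics `(κ₀, κ₁, p)`. -/
structure PDelta (p δ κ₀ κ₁ : ℝ) (S : Mat3 → Mat3) : Prop where
  cont : Continuous S
  smooth : ContDiffOn ℝ 1 S {(0 : Mat3)}ᶜ
  symval : ∀ P, (S P)ᵀ = S P
  symdep : ∀ P, S P = S (msym P)
  zero : S 0 = 0
  lower : ∀ P Q : Mat3, msym P ≠ 0 →
    κ₀ * phi'' p δ (mnorm (msym P)) * (mnorm (msym Q)) ^ 2 ≤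
      ∑ i, ∑ j, ∑ k, ∑ l, DS S P k l i j * Q i j * Q k l
  upper : ∀ P : Mat3, msym P ≠ 0 → ∀ i j k l : Fin 3,
    |DS S P k l i j| ≤ κ₁ * phi'' p δ (mnorm (msym P))

/-- The tensor field `F(P) = (δ + |P^sym|)^{(p-2)/2} P^sym` associated to `S`. -/
def Fassoc (p δ : ℝ) (P : Mat3) : Mat3 :=
  (δ + mnorm (msym P)) ^ ((p - 2) / 2) • msym P

/-- The derivative of the shifted N-function: `φ'_a(t) = φ'(a+t)·t/(a+t)`. -/
def phiShift' (p δ a t : ℝ) : ℝ := phi' p δ (a + t) * t / (a + t)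

/-!
Along the segment `γ θ = A + θ • (B - A)` joining the symmetric parts, `S B - S A` is the
integral of `DS (γ θ) (B - A)`. The `(p, δ)`-structure bounds this integrand from above, and its
pairing with `B - A` from below, by `φ''(|γ θ|) |B - A| ≃ (δ + |γ θ|)^(p-2) |B - A|`; for
`p > 1` the elementary estimate `∫₀¹ (δ + |A + θ D|)^(p-2) dθ ≃ (δ + |A| + |D|)^(p-2)` turns
both bounds into `φ'_{|A|}(|B - A|) = (δ + |A| + |B - A|)^(p-2) |B - A|`. If the segment
passes through `0`, where `S` need not be differentiable, both endpoints are shifted by `ε U`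
with `U` symmetric and not parallel to `B - A`, and `ε → 0` by continuity of `S`.
-/

open Set MeasureTheory
open scoped RealInnerProductSpace

theorem integral_le_of_le_mul_sub_rpow {f : ℝ → ℝ} {r c u β : ℝ} (hr : -1 < r) (huβ : u ≤ β)
    (hf : ContinuousOn f (Icc u β)) (hle : ∀ θ ∈ Ioo u β, f θ ≤ c * (θ - u) ^ r) :
    ∫ θ in u..β, f θ ≤ c * (β - u) ^ (r + 1) / (r + 1) := by
  have hr1 : r + 1 ≠ 0 := by linarith
  -- Comparing with an antiderivative avoids integrating the singular `(θ - u) ^ r` itself.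
  have hderiv : ∀ θ ∈ Ioo u β, HasDerivWithinAt (fun θ => c * (θ - u) ^ (r + 1) / (r + 1))
      (c * (θ - u) ^ r) (Ioi θ) θ := by
    intro θ hθ
    have h := (((hasDerivAt_id θ).sub_const u).rpow_const (p := r + 1)
      (Or.inl (sub_pos.2 hθ.1).ne')).const_mul c |>.div_const (r + 1)
    refine (h.congr_deriv ?_).hasDerivWithinAt
    simp only [id, add_sub_cancel_right]
    field_simp
  have hcont : ContinuousOn (fun θ => c * (θ - u) ^ (r + 1) / (r + 1)) (Icc u β) :=
    (((Real.continuous_rpow_const (by linarith)).comp (continuous_sub_right u)).const_smul c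
      |>.div_const _).continuousOn
  simpa [Real.zero_rpow hr1] using
    intervalIntegral.integral_le_sub_of_hasDeriv_right_of_le huβ hcont hderiv
      (hf.integrableOn_Icc) hle

-- `θ = u` is excluded: there `|θ - u| ^ r = 0 ^ r = 0` for `r ≠ 0`.
theorem integral_le_of_le_mul_abs_sub_rpow {f : ℝ → ℝ} {r c u α β : ℝ} (hr : -1 < r)
    (hαu : α ≤ u) (huβ : u ≤ β) (hf : ContinuousOn f (Icc α β))
    (hle : ∀ θ ∈ Icc α β, θ ≠ u → f θ ≤ c * |θ - u| ^ r) :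
    ∫ θ in α..β, f θ ≤ c * ((u - α) ^ (r + 1) + (β - u) ^ (r + 1)) / (r + 1) := by
  have hleft : ∫ θ in α..u, f θ ≤ c * (u - α) ^ (r + 1) / (r + 1) := by
    have hneg := intervalIntegral.integral_comp_neg (a := -u) (b := -α) f
    rw [neg_neg, neg_neg] at hneg
    rw [← hneg, show u - α = -α - -u by ring]
    refine integral_le_of_le_mul_sub_rpow hr (neg_le_neg hαu) ?_ fun θ hθ => ?_
    · exact hf.comp continuous_neg.continuousOn fun θ hθ =>
        ⟨by linarith [hθ.2], by linarith [hθ.1]⟩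
    · have := hle (-θ) ⟨by linarith [hθ.2], by linarith [hθ.1]⟩ (by linarith [hθ.1])
      rwa [show |-θ - u| = θ - -u by rw [abs_of_neg (by linarith [hθ.1])]; ring] at this
  have hright : ∫ θ in u..β, f θ ≤ c * (β - u) ^ (r + 1) / (r + 1) :=
    integral_le_of_le_mul_sub_rpow hr huβ (hf.mono (Icc_subset_Icc hαu le_rfl)) fun θ hθ => by
      simpa [abs_of_pos (sub_pos.2 hθ.1)] using hle θ ⟨by linarith [hθ.1], hθ.2.le⟩ hθ.1.ne'
  rw [← intervalIntegral.integral_add_adjacent_intervals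
    ((hf.mono (Icc_subset_Icc le_rfl huβ)).intervalIntegrable_of_Icc hαu)
    ((hf.mono (Icc_subset_Icc hαu le_rfl)).intervalIntegrable_of_Icc huβ)]
  rw [mul_add, add_div]
  linarith

theorem continuousOn_fderiv_segment {E F : Type*} [NormedAddCommGroup E] [NormedSpace ℝ E]
    [NormedAddCommGroup F] [NormedSpace ℝ F] {f : E → F} {U : Set E}
    (hf : ContDiffOn ℝ 1 f U) (hU : IsOpen U) {x d : E}
    (hseg : ∀ θ ∈ Icc (0:ℝ) 1, x + θ • d ∈ U) :
    ContinuousOn (fun θ : ℝ => fderiv ℝ f (x + θ • d) d) (Icc 0 1) :=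
  ((hf.continuousOn_fderiv_of_isOpen hU le_rfl).comp (by fun_prop) hseg).clm_apply
    continuousOn_const

theorem map_sub_eq_integral_fderiv_segment {E F G : Type*} [NormedAddCommGroup E]
    [NormedSpace ℝ E] [NormedAddCommGroup F] [NormedSpace ℝ F] [NormedAddCommGroup G]
    [NormedSpace ℝ G] [CompleteSpace G] (Φ : F →L[ℝ] G) {f : E → F} {U : Set E}
    (hf : ContDiffOn ℝ 1 f U) (hU : IsOpen U) {x d : E}
    (hseg : ∀ θ ∈ Icc (0:ℝ) 1, x + θ • d ∈ U) :
    Φ (f (x + d) - f x) = ∫ θ in (0:ℝ)..1, Φ (fderiv ℝ f (x + θ • d) d) := by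
  have hderiv : ∀ θ ∈ uIcc (0:ℝ) 1,
      HasDerivAt (fun θ : ℝ => Φ (f (x + θ • d))) (Φ (fderiv ℝ f (x + θ • d) d)) θ := by
    intro θ hθ
    rw [uIcc_of_le zero_le_one] at hθ
    have hγ : HasDerivAt (fun θ : ℝ => x + θ • d) d θ := by
      simpa using ((hasDerivAt_id θ).smul_const d).const_add x
    exact Φ.hasFDerivAt.comp_hasDerivAt θ (((hf.differentiableOn one_ne_zero).differentiableAt
      (hU.mem_nhds (hseg θ hθ))).hasFDerivAt.comp_hasDerivAt θ hγ)
  have hcont := Φ.continuous.comp_continuousOn (continuousOn_fderiv_segment hf hU hseg)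
  rw [← uIcc_of_le zero_le_one] at hcont
  simpa using (intervalIntegral.integral_eq_sub_of_hasDerivAt hderiv hcont.intervalIntegrable).symm

theorem mul_rpow_le_integral_rpow {g : ℝ → ℝ} {m r α β : ℝ} (hr : 0 ≤ r) (hm : 0 ≤ m)
    (hα : 0 ≤ α) (hαβ : α ≤ β) (hβ : β ≤ 1)
    (hg : IntervalIntegrable (fun θ => g θ ^ r) volume 0 1) (hg0 : ∀ θ, 0 ≤ g θ)
    (hgm : ∀ θ ∈ Icc α β, m ≤ g θ) :
    (β - α) * m ^ r ≤ ∫ θ in (0:ℝ)..1, g θ ^ r := by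
  have hsub : uIcc α β ⊆ uIcc 0 1 := by
    rw [uIcc_of_le zero_le_one, uIcc_of_le hαβ]
    exact Icc_subset_Icc hα hβ
  calc (β - α) * m ^ r = ∫ θ in α..β, m ^ r := by simp
    _ ≤ ∫ θ in α..β, g θ ^ r :=
        intervalIntegral.integral_mono_on hαβ intervalIntegrable_const (hg.mono_set hsub)
          fun θ hθ => Real.rpow_le_rpow hm (hgm θ hθ) hr
    _ ≤ _ := intervalIntegral.integral_mono_interval hα hαβ hβ
        (Filter.Eventually.of_forall fun θ => Real.rpow_nonneg (hg0 θ) r) hg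

section Segment

variable {E : Type*} [NormedAddCommGroup E] [NormedSpace ℝ E] {x d : E} {δ r : ℝ}

theorem abs_norm_sub_mul_le_norm_add_smul {θ : ℝ} (hθ : 0 ≤ θ) :
    |‖x‖ - θ * ‖d‖| ≤ ‖x + θ • d‖ := by
  simpa [norm_smul, abs_of_nonneg hθ] using abs_norm_sub_norm_le x (-(θ • d))

theorem norm_add_smul_le {θ : ℝ} (hθ : 0 ≤ θ) : ‖x + θ • d‖ ≤ ‖x‖ + θ * ‖d‖ := by
  simpa [norm_smul, abs_of_nonneg hθ] using norm_add_le x (θ • d)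

theorem continuousOn_rpow_norm_segment (hδ : 0 ≤ δ)
    (hseg : ∀ θ ∈ Icc (0:ℝ) 1, x + θ • d ≠ 0) :
    ContinuousOn (fun θ : ℝ => (δ + ‖x + θ • d‖) ^ r) (Icc 0 1) :=
  ContinuousOn.rpow_const (by fun_prop) fun θ hθ =>
    Or.inl (add_pos_of_nonneg_of_pos hδ (norm_pos_iff.2 (hseg θ hθ))).ne'

theorem integral_rpow_norm_segment_ge (hδ : 0 ≤ δ) (hseg : ∀ θ ∈ Icc (0:ℝ) 1, x + θ • d ≠ 0) :
    min 1 (6 ^ (-r) / 4) * (δ + ‖x‖ + ‖d‖) ^ r ≤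
      ∫ θ in (0:ℝ)..1, (δ + ‖x + θ • d‖) ^ r := by
  set s := δ + ‖x‖ + ‖d‖
  have hs : 0 < s := by
    have := norm_pos_iff.2 (by simpa using hseg 0 ⟨le_rfl, zero_le_one⟩)
    positivity
  have hint : IntervalIntegrable (fun θ : ℝ => (δ + ‖x + θ • d‖) ^ r) volume 0 1 :=
    (continuousOn_rpow_norm_segment hδ hseg).intervalIntegrable_of_Icc zero_le_one
  rcases le_total r 0 with hr0 | hr0
  · calc min 1 (6 ^ (-r) / 4) * s ^ r ≤ ∫ θ in (0:ℝ)..1, s ^ r := by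
          simpa using mul_le_mul_of_nonneg_right (min_le_left 1 (6 ^ (-r) / 4 : ℝ))
            (Real.rpow_nonneg hs.le r)
      _ ≤ _ := intervalIntegral.integral_mono_on zero_le_one intervalIntegrable_const hint
          fun θ hθ => Real.rpow_le_rpow_of_nonpos
            (add_pos_of_nonneg_of_pos hδ (norm_pos_iff.2 (hseg θ hθ)))
            (by linarith [norm_add_smul_le (x := x) (d := d) hθ.1,
              mul_le_of_le_one_left (norm_nonneg d) hθ.2]) hr0
  have hg0 : ∀ θ : ℝ, 0 ≤ δ + ‖x + θ • d‖ := fun θ => add_nonneg hδ (norm_nonneg _)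
  -- On a quarter of `[0, 1]` at one end of the segment, `δ + ‖x + θ • d‖ ≥ s / 6`.
  have hquarter : (s / 6) ^ r / 4 ≤ ∫ θ in (0:ℝ)..1, (δ + ‖x + θ • d‖) ^ r := by
    rcases le_total ‖d‖ (2 * ‖x‖) with h | h
    · have hbound : ∀ θ ∈ Icc (0:ℝ) (1/4), s / 6 ≤ δ + ‖x + θ • d‖ := fun θ hθ => by
        have h1 := (le_abs_self _).trans
          (abs_norm_sub_mul_le_norm_add_smul (x := x) (d := d) hθ.1)
        nlinarith [hθ.2, norm_nonneg d]
      linarith [mul_rpow_le_integral_rpow hr0 (by positivity) le_rfl (by norm_num) (by norm_num)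
        hint hg0 hbound]
    · have hbound : ∀ θ ∈ Icc (3/4 : ℝ) 1, s / 6 ≤ δ + ‖x + θ • d‖ := fun θ hθ => by
        have h1 := (neg_le_abs _).trans (abs_norm_sub_mul_le_norm_add_smul (x := x) (d := d)
          (θ := θ) (by linarith [hθ.1]))
        nlinarith [hθ.1, norm_nonneg d, norm_nonneg x]
      linarith [mul_rpow_le_integral_rpow hr0 (by positivity) (by norm_num) (by norm_num) le_rfl
        hint hg0 hbound]
  calc min 1 (6 ^ (-r) / 4) * s ^ r ≤ 6 ^ (-r) / 4 * s ^ r :=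
        mul_le_mul_of_nonneg_right (min_le_right _ _) (by positivity)
    _ = (s / 6) ^ r / 4 := by
        rw [Real.div_rpow hs.le (by norm_num), Real.rpow_neg (by norm_num)]; ring
    _ ≤ _ := hquarter

theorem integral_rpow_norm_segment_le_of_ne_zero (hδ : 0 ≤ δ)
    (hseg : ∀ θ ∈ Icc (0:ℝ) 1, x + θ • d ≠ 0) (hr : -1 < r) (hr0 : r ≤ 0) (hd : d ≠ 0) :
    ∫ θ in (0:ℝ)..1, (δ + ‖x + θ • d‖) ^ r ≤ 2 / (r + 1) * ‖d‖ ^ r := by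
  set t := ‖d‖
  have ht : 0 < t := norm_pos_iff.2 hd
  -- `u` minimises `|‖x‖ - θ * t|`, the lower bound for `‖x + θ • d‖`, over `θ ∈ [0, 1]`.
  set u := min ‖x‖ t / t
  have hu : u ∈ Icc (0:ℝ) 1 := ⟨by positivity, (div_le_one ht).2 (min_le_right _ _)⟩
  have hptw : ∀ θ ∈ Icc (0:ℝ) 1, θ ≠ u → (δ + ‖x + θ • d‖) ^ r ≤ t ^ r * |θ - u| ^ r := by
    intro θ hθ hne
    have hdist : t * |θ - u| ≤ |‖x‖ - θ * t| := by
      rw [← abs_of_pos ht, ← abs_mul, abs_of_pos ht, mul_sub, mul_div_cancel₀ _ ht.ne',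
        abs_sub_comm, mul_comm t θ]
      rcases le_total ‖x‖ t with h | h
      · rw [min_eq_left h]
      · rw [min_eq_right h, abs_of_nonneg (by nlinarith [hθ.2]),
          abs_of_nonneg (by nlinarith [hθ.2])]
        linarith
    rw [← Real.mul_rpow ht.le (abs_nonneg _)]
    exact Real.rpow_le_rpow_of_nonpos (mul_pos ht (abs_pos.2 (sub_ne_zero.2 hne)))
      (by linarith [abs_norm_sub_mul_le_norm_add_smul (x := x) (d := d) hθ.1]) hr0
  have hunit : ∀ v ∈ Icc (0:ℝ) 1, v ^ (r + 1) ≤ 1 := fun v hv =>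
    Real.rpow_le_one hv.1 hv.2 (by linarith)
  calc ∫ θ in (0:ℝ)..1, (δ + ‖x + θ • d‖) ^ r
      ≤ t ^ r * ((u - 0) ^ (r + 1) + (1 - u) ^ (r + 1)) / (r + 1) :=
        integral_le_of_le_mul_abs_sub_rpow hr hu.1 hu.2
          (continuousOn_rpow_norm_segment hδ hseg) hptw
    _ ≤ t ^ r * 2 / (r + 1) := by
        have : 0 < r + 1 := by linarith
        gcongr
        rw [sub_zero]
        linarith [hunit u hu, hunit (1 - u) ⟨by linarith [hu.2], by linarith [hu.1]⟩]
    _ = 2 / (r + 1) * t ^ r := by ring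

theorem integral_rpow_norm_segment_le (hδ : 0 ≤ δ) (hseg : ∀ θ ∈ Icc (0:ℝ) 1, x + θ • d ≠ 0)
    (hr : -1 < r) :
    ∫ θ in (0:ℝ)..1, (δ + ‖x + θ • d‖) ^ r ≤ (1 + 8 / (r + 1)) * (δ + ‖x‖ + ‖d‖) ^ r := by
  set s := δ + ‖x‖ + ‖d‖
  have hs : 0 < s := by
    have := norm_pos_iff.2 (by simpa using hseg 0 ⟨le_rfl, zero_le_one⟩)
    positivity
  have hint : IntervalIntegrable (fun θ : ℝ => (δ + ‖x + θ • d‖) ^ r) volume 0 1 :=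
    (continuousOn_rpow_norm_segment hδ hseg).intervalIntegrable_of_Icc zero_le_one
  have hsr : 0 ≤ s ^ r := Real.rpow_nonneg hs.le r
  have hr1 : 0 < r + 1 := by linarith
  rcases le_total 0 r with hr0 | hr0
  · calc ∫ θ in (0:ℝ)..1, (δ + ‖x + θ • d‖) ^ r ≤ ∫ θ in (0:ℝ)..1, s ^ r :=
          intervalIntegral.integral_mono_on zero_le_one hint intervalIntegrable_const
            fun θ hθ => Real.rpow_le_rpow (add_nonneg hδ (norm_nonneg _))
              (by linarith [norm_add_smul_le (x := x) (d := d) hθ.1,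
                mul_le_of_le_one_left (norm_nonneg d) hθ.2]) hr0
      _ ≤ (1 + 8 / (r + 1)) * s ^ r := by
          have h1 : (1:ℝ) ≤ 1 + 8 / (r + 1) := le_add_of_nonneg_right (by positivity)
          simpa using mul_le_mul_of_nonneg_right h1 hsr
  have hquarter : (s / 4) ^ r ≤ 4 * s ^ r := by
    rw [Real.div_rpow hs.le (by norm_num), div_eq_mul_inv, ← Real.rpow_neg (by norm_num),
      mul_comm]
    have h4 : (4:ℝ) ^ (-r) ≤ 4 := by
      simpa using Real.rpow_le_rpow_of_exponent_le (show (1:ℝ) ≤ 4 by norm_num)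
        (show -r ≤ 1 by linarith)
    exact mul_le_mul_of_nonneg_right h4 hsr
  have h8 : 8 ≤ 8 / (r + 1) := by rw [le_div_iff₀ hr1]; linarith
  by_cases hfar : ‖d‖ ≤ δ ∨ 2 * ‖d‖ ≤ ‖x‖
  · have hfar' : ∀ θ ∈ Icc (0:ℝ) 1, s / 4 ≤ δ + ‖x + θ • d‖ := by
      intro θ hθ
      have h1 := (le_abs_self _).trans
        (abs_norm_sub_mul_le_norm_add_smul (x := x) (d := d) hθ.1)
      have h2 := mul_le_of_le_one_left (norm_nonneg d) hθ.2
      rcases hfar with h | h <;> linarith [norm_nonneg (x + θ • d)]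
    calc ∫ θ in (0:ℝ)..1, (δ + ‖x + θ • d‖) ^ r ≤ ∫ θ in (0:ℝ)..1, (s / 4) ^ r :=
          intervalIntegral.integral_mono_on zero_le_one hint intervalIntegrable_const
            fun θ hθ => Real.rpow_le_rpow_of_nonpos (by positivity) (hfar' θ hθ) hr0
      _ ≤ (1 + 8 / (r + 1)) * s ^ r := by
          simp only [intervalIntegral.integral_const, sub_zero, one_smul]
          nlinarith
  simp only [not_or, not_le] at hfar
  calc ∫ θ in (0:ℝ)..1, (δ + ‖x + θ • d‖) ^ r ≤ 2 / (r + 1) * ‖d‖ ^ r :=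
        integral_rpow_norm_segment_le_of_ne_zero hδ hseg hr hr0
          (norm_pos_iff.1 (hδ.trans_lt hfar.1))
    _ ≤ 2 / (r + 1) * (4 * s ^ r) := by
        gcongr
        exact (Real.rpow_le_rpow_of_nonpos (div_pos hs (by norm_num)) (by linarith) hr0).trans
          hquarter
    _ = 8 / (r + 1) * s ^ r := by ring
    _ ≤ (1 + 8 / (r + 1)) * s ^ r := by nlinarith

end Segment

-- `Mat3` is normed by the entrywise sup norm, whereas `mnorm` is the Euclidean norm of the
-- flattened matrix: `mnorm A = ‖matToEuclidean A‖`.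
def matToEuclidean : Mat3 →L[ℝ] EuclideanSpace ℝ (Fin 3 × Fin 3) :=
  LinearMap.toContinuousLinearMap
    ((WithLp.linearEquiv 2 ℝ (Fin 3 × Fin 3 → ℝ)).symm.toLinearMap ∘ₗ
      (LinearEquiv.curry ℝ ℝ (Fin 3) (Fin 3)).symm.toLinearMap)

@[simp] theorem matToEuclidean_apply (A : Mat3) (x : Fin 3 × Fin 3) :
    matToEuclidean A x = A x.1 x.2 := rfl

theorem mdot_eq_inner (A B : Mat3) : mdot A B = ⟪matToEuclidean A, matToEuclidean B⟫ := by
  simp [mdot, PiLp.inner_apply, Fintype.sum_prod_type, mul_comm]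

theorem mdot_comm (A B : Mat3) : mdot A B = mdot B A := by
  simp only [mdot, mul_comm]

theorem mnorm_eq_norm (A : Mat3) : mnorm A = ‖matToEuclidean A‖ := by
  rw [mnorm, mdot_eq_inner, real_inner_self_eq_norm_sq, Real.sqrt_sq (norm_nonneg _)]

theorem mnorm_nonneg (A : Mat3) : 0 ≤ mnorm A := by
  rw [mnorm_eq_norm]; exact norm_nonneg _

theorem matToEuclidean_injective : Function.Injective matToEuclidean := fun A B h => by
  ext i j
  exact congrArg (· (i, j)) h

theorem mnorm_zero : mnorm 0 = 0 := by
  simp [mnorm_eq_norm]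

theorem mnorm_pos {A : Mat3} (hA : A ≠ 0) : 0 < mnorm A := by
  rw [mnorm_eq_norm]
  exact norm_pos_iff.2 ((map_ne_zero_iff _ matToEuclidean_injective).2 hA)

theorem mnorm_sub_comm (A B : Mat3) : mnorm (A - B) = mnorm (B - A) := by
  simp only [mnorm_eq_norm, map_sub, norm_sub_rev]

theorem continuous_mnorm : Continuous mnorm := by
  simp_rw [funext mnorm_eq_norm]
  fun_prop

theorem mnorm_le_of_forall_abs_le {A : Mat3} {M : ℝ} (h : ∀ i j, |A i j| ≤ M) :
    mnorm A ≤ 3 * M := by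
  have hM : 0 ≤ M := (abs_nonneg _).trans (h 0 0)
  have hsum : mdot A A ≤ (3 * M) ^ 2 := by
    calc mdot A A ≤ ∑ _i : Fin 3, ∑ _j : Fin 3, M * M :=
          Finset.sum_le_sum fun i _ => Finset.sum_le_sum fun j _ => by
            rw [← abs_mul_abs_self]; exact mul_self_le_mul_self (abs_nonneg _) (h i j)
      _ = (3 * M) ^ 2 := by simp; ring
  exact (Real.sqrt_le_sqrt hsum).trans_eq (Real.sqrt_sq (by positivity))

theorem msym_add (A B : Mat3) : msym (A + B) = msym A + msym B := by
  simp only [msym, transpose_add]; module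

theorem msym_smul (c : ℝ) (A : Mat3) : msym (c • A) = c • msym A := by
  simp only [msym, transpose_smul]; module

theorem msym_sub (A B : Mat3) : msym (A - B) = msym A - msym B := by
  simp only [msym, transpose_sub]; module

theorem msym_of_transpose_eq {A : Mat3} (h : Aᵀ = A) : msym A = A := by
  rw [msym, h]; module

theorem msym_msym (P : Mat3) : msym (msym P) = msym P :=
  msym_of_transpose_eq (by simp only [msym, transpose_smul, transpose_add, transpose_transpose,
    add_comm])

theorem exists_msym_eq_forall_ne_smul (D : Mat3) : ∃ U, msym U = U ∧ ∀ c : ℝ, U ≠ c • D := by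
  by_contra! h
  obtain ⟨c₀, h₀⟩ := h (single 0 0 1) (msym_of_transpose_eq (transpose_single _ _ _))
  obtain ⟨c₁, h₁⟩ := h (single 1 1 1) (msym_of_transpose_eq (transpose_single _ _ _))
  have e₀₀ := congrFun (congrFun h₀ 0) 0
  have e₁₀ := congrFun (congrFun h₁ 0) 0
  have e₁₁ := congrFun (congrFun h₁ 1) 1
  simp [single] at e₀₀ e₁₀ e₁₁
  rcases e₁₀ with h | h <;> simp [h] at e₀₀ e₁₁

theorem clm_apply_eq_sum_single (L : Mat3 →L[ℝ] Mat3) (Q : Mat3) (i j : Fin 3) :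
    L Q i j = ∑ k, ∑ l, Q k l * L (single k l 1) i j := by
  conv_lhs => rw [matrix_eq_sum_single Q]
  simp only [map_sum, Matrix.sum_apply]
  refine Finset.sum_congr rfl fun k _ => Finset.sum_congr rfl fun l _ => ?_
  rw [← smul_eq_mul, ← Matrix.smul_apply, ← map_smul, smul_single, smul_eq_mul, mul_one]

theorem msym_add_smul {A D : Mat3} (hA : msym A = A) (hD : msym D = D) (θ : ℝ) :
    msym (A + θ • D) = A + θ • D := by
  rw [msym_add, msym_smul, hA, hD]

theorem matToEuclidean_segment_ne_zero {A D : Mat3} (hseg : ∀ θ ∈ Icc (0:ℝ) 1, A + θ • D ≠ 0) :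
    ∀ θ ∈ Icc (0:ℝ) 1, matToEuclidean A + θ • matToEuclidean D ≠ 0 := fun θ hθ => by
  rw [← map_smul, ← map_add]
  exact (map_ne_zero_iff _ matToEuclidean_injective).2 (hseg θ hθ)

theorem continuousOn_rpow_mnorm_segment {δ r : ℝ} (hδ : 0 ≤ δ) {A D : Mat3}
    (hseg : ∀ θ ∈ Icc (0:ℝ) 1, A + θ • D ≠ 0) :
    ContinuousOn (fun θ : ℝ => (δ + mnorm (A + θ • D)) ^ r) (Icc 0 1) := by
  simp only [mnorm_eq_norm, map_add, map_smul]
  exact continuousOn_rpow_norm_segment hδ (matToEuclidean_segment_ne_zero hseg)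

theorem phi''_eq {p δ s : ℝ} (h : 0 < δ + s) :
    phi'' p δ s = (δ + s) ^ (p - 2) * (1 + (p - 2) * (s / (δ + s))) := by
  rw [phi'', show p - 3 = p - 2 - 1 by ring, Real.rpow_sub h, Real.rpow_one]
  field_simp
  ring

theorem min_mul_rpow_le_phi'' {p δ s : ℝ} (hδ : 0 ≤ δ) (hs : 0 ≤ s)
    (h : 0 < δ + s) : min (p - 1) 1 * (δ + s) ^ (p - 2) ≤ phi'' p δ s := by
  have hρ : s / (δ + s) ≤ 1 := div_le_one_of_le₀ (by linarith) h.le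
  have hρ' : 0 ≤ s / (δ + s) := div_nonneg hs h.le
  rw [phi''_eq h, mul_comm]
  refine mul_le_mul_of_nonneg_left ?_ (Real.rpow_nonneg h.le _)
  rcases le_total p 2 with h2 | h2
  · rw [min_eq_left (by linarith)]; nlinarith
  · rw [min_eq_right (by linarith)]; nlinarith

theorem phi''_le_max_mul_rpow {p δ s : ℝ} (hδ : 0 ≤ δ) (hs : 0 ≤ s) (h : 0 < δ + s) :
    phi'' p δ s ≤ max (p - 1) 1 * (δ + s) ^ (p - 2) := by
  have hρ : s / (δ + s) ≤ 1 := div_le_one_of_le₀ (by linarith) h.le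
  have hρ' : 0 ≤ s / (δ + s) := div_nonneg hs h.le
  rw [phi''_eq h, mul_comm]
  refine mul_le_mul_of_nonneg_right ?_ (Real.rpow_nonneg h.le _)
  rcases le_total p 2 with h2 | h2
  · rw [max_eq_right (by linarith)]; nlinarith
  · rw [max_eq_left (by linarith)]; nlinarith

theorem phiShift'_eq {p δ a t : ℝ} (ha : 0 ≤ a) (ht : 0 ≤ t) :
    phiShift' p δ a t = (δ + a + t) ^ (p - 2) * t := by
  rcases ht.eq_or_lt with rfl | ht
  · simp [phiShift', phi']
  · rw [phiShift', phi', add_assoc]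
    field_simp

def hammerLowerConst (p κ₀ : ℝ) : ℝ := κ₀ * min (p - 1) 1 * min 1 (6 ^ (2 - p) / 4)

def hammerUpperConst (p κ₁ : ℝ) : ℝ := 9 * κ₁ * max (p - 1) 1 * (1 + 8 / (p - 1))

theorem hammerLowerConst_pos {p κ₀ : ℝ} (hp : 1 < p) (hκ₀ : 0 < κ₀) : 0 < hammerLowerConst p κ₀ :=
  mul_pos (mul_pos hκ₀ (lt_min (by linarith) one_pos)) (lt_min one_pos (by positivity))

theorem hammerUpperConst_pos {p κ₁ : ℝ} (hp : 1 < p) (hκ₁ : 0 < κ₁) :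
    0 < hammerUpperConst p κ₁ := by
  have : 0 < p - 1 := by linarith
  have := lt_max_of_lt_right (b := p - 1) (zero_lt_one' ℝ)
  rw [hammerUpperConst]
  positivity

def HammerEstimate (p δ c C : ℝ) (S : Mat3 → Mat3) (A B : Mat3) : Prop :=
  c * phiShift' p δ (mnorm A) (mnorm (A - B)) ≤ mnorm (S A - S B) ∧
    mnorm (S A - S B) ≤ C * phiShift' p δ (mnorm A) (mnorm (A - B))

theorem hammerEstimate_of_shift {p δ c C : ℝ} {S : Mat3 → Mat3} (hS : Continuous S)
    (hδ : 0 ≤ δ) {A B U : Mat3} (hAB : A ≠ B)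
    (h : ∀ ε : ℝ, 0 < ε → HammerEstimate p δ c C S (A + ε • U) (B + ε • U)) :
    HammerEstimate p δ c C S A B := by
  simp only [HammerEstimate, add_sub_add_right_eq_sub] at h ⊢
  have hshift : ∀ X : Mat3, Continuous fun ε : ℝ => X + ε • U := fun X => by fun_prop
  have hbound : Continuous fun ε : ℝ => phiShift' p δ (mnorm (A + ε • U)) (mnorm (A - B)) := by
    simp only [phiShift'_eq (mnorm_nonneg _) (mnorm_nonneg _)]
    refine (Continuous.rpow_const ?_ fun ε => Or.inl (ne_of_gt ?_)).mul continuous_const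
    · exact (continuous_const.add (continuous_mnorm.comp (hshift A))).add continuous_const
    · linarith [mnorm_nonneg (A + ε • U), mnorm_pos (sub_ne_zero.2 hAB)]
  have hdiff : Continuous fun ε : ℝ => mnorm (S (A + ε • U) - S (B + ε • U)) :=
    continuous_mnorm.comp ((hS.comp (hshift A)).sub (hS.comp (hshift B)))
  have h0 : (0:ℝ) ∈ closure (Ioi 0) := by simp
  constructor
  · simpa using ContinuousWithinAt.closure_le h0 (continuous_const.mul hbound).continuousWithinAt
      hdiff.continuousWithinAt fun ε hε => (h ε hε).1
  · simpa using ContinuousWithinAt.closure_le h0 hdiff.continuousWithinAt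
      (continuous_const.mul hbound).continuousWithinAt fun ε hε => (h ε hε).2

namespace PDelta

variable {p δ κ₀ κ₁ : ℝ} {S : Mat3 → Mat3}

theorem mdot_fderiv_ge (hS : PDelta p δ κ₀ κ₁ S) {X Q : Mat3} (hX : msym X = X) (hX0 : X ≠ 0)
    (hQ : msym Q = Q) : κ₀ * phi'' p δ (mnorm X) * mnorm Q ^ 2 ≤ mdot (fderiv ℝ S X Q) Q := by
  have h := hS.lower X Q (hX.symm ▸ hX0)
  rw [hX, hQ] at h
  refine h.trans_eq ?_
  simp only [mdot, clm_apply_eq_sum_single _ Q, Finset.sum_mul, DS]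
  refine Finset.sum_congr rfl fun i _ => Finset.sum_congr rfl fun j _ =>
    Finset.sum_congr rfl fun k _ => Finset.sum_congr rfl fun l _ => ?_
  ring

theorem mnorm_fderiv_le (hS : PDelta p δ κ₀ κ₁ S) {X : Mat3} (hX : msym X = X) (hX0 : X ≠ 0)
    (Q : Mat3) : mnorm (fderiv ℝ S X Q) ≤ 9 * κ₁ * phi'' p δ (mnorm X) * mnorm Q := by
  set M := κ₁ * phi'' p δ (mnorm X)
  have hDS : ∀ i j k l, |DS S X k l i j| ≤ M := by
    simpa only [hX] using hS.upper X (hX.symm ▸ hX0)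
  have hentry : ∀ i j, |fderiv ℝ S X Q i j| ≤ 3 * M * mnorm Q := fun i j => by
    have hrow : fderiv ℝ S X Q i j = mdot Q (Matrix.of fun k l => DS S X k l i j) := by
      simp [clm_apply_eq_sum_single _ Q, mdot, DS]
    have hC := mnorm_le_of_forall_abs_le fun k l => hDS i j k l
    rw [hrow, mdot_eq_inner]
    refine (abs_real_inner_le_norm _ _).trans ?_
    rw [← mnorm_eq_norm, ← mnorm_eq_norm, mul_comm _ (mnorm Q)]
    exact mul_le_mul_of_nonneg_left hC (mnorm_nonneg Q)
  calc mnorm (fderiv ℝ S X Q) ≤ 3 * (3 * M * mnorm Q) := mnorm_le_of_forall_abs_le hentry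
    _ = 9 * κ₁ * phi'' p δ (mnorm X) * mnorm Q := by ring

theorem mul_integral_le_mnorm_sub (hS : PDelta p δ κ₀ κ₁ S) (hκ₀ : 0 ≤ κ₀) (hδ : 0 ≤ δ)
    {A D : Mat3} (hA : msym A = A) (hD : msym D = D)
    (hseg : ∀ θ ∈ Icc (0:ℝ) 1, A + θ • D ≠ 0) :
    κ₀ * min (p - 1) 1 * mnorm D * ∫ θ in (0:ℝ)..1, (δ + mnorm (A + θ • D)) ^ (p - 2) ≤
      mnorm (S (A + D) - S A) := by
  set I := ∫ θ in (0:ℝ)..1, (δ + mnorm (A + θ • D)) ^ (p - 2)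
  set V := S (A + D) - S A
  rcases (mnorm_nonneg D).eq_or_lt with ht | ht
  · rw [← ht, mul_zero, zero_mul]; exact mnorm_nonneg V
  have hftc : mdot V D = ∫ θ in (0:ℝ)..1, mdot (fderiv ℝ S (A + θ • D) D) D := by
    simp only [mdot_comm _ D, mdot_eq_inner]
    exact map_sub_eq_integral_fderiv_segment ((innerSL ℝ (matToEuclidean D)).comp matToEuclidean)
      hS.smooth isOpen_compl_singleton hseg
  have hcont := ((innerSL ℝ (matToEuclidean D)).comp matToEuclidean).continuous.comp_continuousOn
    (continuousOn_fderiv_segment hS.smooth isOpen_compl_singleton hseg)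
  simp only [Function.comp_def, ContinuousLinearMap.comp_apply, innerSL_apply_apply,
    ← mdot_eq_inner, mdot_comm D] at hcont
  have hmono : κ₀ * min (p - 1) 1 * mnorm D ^ 2 * I ≤ mdot V D := by
    rw [hftc, ← intervalIntegral.integral_const_mul]
    refine intervalIntegral.integral_mono_on zero_le_one
      ((continuousOn_const.mul (continuousOn_rpow_mnorm_segment hδ hseg)).intervalIntegrable_of_Icc
        zero_le_one) (hcont.intervalIntegrable_of_Icc zero_le_one) fun θ hθ => ?_
    have hγ := msym_add_smul hA hD θ
    have hγ0 := mnorm_pos (hseg θ hθ)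
    calc κ₀ * min (p - 1) 1 * mnorm D ^ 2 * (δ + mnorm (A + θ • D)) ^ (p - 2)
        = κ₀ * mnorm D ^ 2 * (min (p - 1) 1 * (δ + mnorm (A + θ • D)) ^ (p - 2)) := by ring
      _ ≤ κ₀ * mnorm D ^ 2 * phi'' p δ (mnorm (A + θ • D)) :=
          mul_le_mul_of_nonneg_left (min_mul_rpow_le_phi'' hδ hγ0.le (by linarith))
            (by positivity)
      _ = κ₀ * phi'' p δ (mnorm (A + θ • D)) * mnorm D ^ 2 := by ring
      _ ≤ _ := hS.mdot_fderiv_ge hγ (hseg θ hθ) hD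
  have hcs : mdot V D ≤ mnorm V * mnorm D := by
    rw [mdot_eq_inner, mnorm_eq_norm, mnorm_eq_norm]; exact real_inner_le_norm _ _
  refine le_of_mul_le_mul_right ?_ ht
  calc κ₀ * min (p - 1) 1 * mnorm D * I * mnorm D = κ₀ * min (p - 1) 1 * mnorm D ^ 2 * I := by
        ring
    _ ≤ mnorm V * mnorm D := hmono.trans hcs

theorem mnorm_sub_le_mul_integral (hS : PDelta p δ κ₀ κ₁ S) (hκ₁ : 0 ≤ κ₁) (hδ : 0 ≤ δ)
    {A D : Mat3} (hA : msym A = A) (hD : msym D = D)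
    (hseg : ∀ θ ∈ Icc (0:ℝ) 1, A + θ • D ≠ 0) :
    mnorm (S (A + D) - S A) ≤
      9 * κ₁ * max (p - 1) 1 * mnorm D * ∫ θ in (0:ℝ)..1, (δ + mnorm (A + θ • D)) ^ (p - 2) := by
  have hftc : matToEuclidean (S (A + D) - S A) =
      ∫ θ in (0:ℝ)..1, matToEuclidean (fderiv ℝ S (A + θ • D) D) :=
    map_sub_eq_integral_fderiv_segment matToEuclidean hS.smooth isOpen_compl_singleton hseg
  have hcont := continuous_mnorm.comp_continuousOn
    (continuousOn_fderiv_segment hS.smooth isOpen_compl_singleton hseg)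
  calc mnorm (S (A + D) - S A)
      ≤ ∫ θ in (0:ℝ)..1, ‖matToEuclidean (fderiv ℝ S (A + θ • D) D)‖ := by
        rw [mnorm_eq_norm, hftc]
        exact intervalIntegral.norm_integral_le_integral_norm zero_le_one
    _ = ∫ θ in (0:ℝ)..1, mnorm (fderiv ℝ S (A + θ • D) D) := by simp only [mnorm_eq_norm]
    _ ≤ ∫ θ in (0:ℝ)..1, 9 * κ₁ * max (p - 1) 1 * mnorm D * (δ + mnorm (A + θ • D)) ^ (p - 2) := by
        refine intervalIntegral.integral_mono_on zero_le_one
          (hcont.intervalIntegrable_of_Icc zero_le_one)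
          ((continuousOn_const.mul
            (continuousOn_rpow_mnorm_segment hδ hseg)).intervalIntegrable_of_Icc zero_le_one)
          fun θ hθ => ?_
        have hγ0 := mnorm_pos (hseg θ hθ)
        calc mnorm (fderiv ℝ S (A + θ • D) D)
            ≤ 9 * κ₁ * phi'' p δ (mnorm (A + θ • D)) * mnorm D :=
              hS.mnorm_fderiv_le (msym_add_smul hA hD θ) (hseg θ hθ) D
          _ ≤ 9 * κ₁ * (max (p - 1) 1 * (δ + mnorm (A + θ • D)) ^ (p - 2)) * mnorm D := by
              have hφ := phi''_le_max_mul_rpow (p := p) hδ hγ0.le (by linarith)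
              exact mul_le_mul_of_nonneg_right (mul_le_mul_of_nonneg_left hφ (by positivity))
                (mnorm_nonneg D)
          _ = _ := by ring
    _ = _ := intervalIntegral.integral_const_mul _ _

theorem hammerEstimate_of_segment (hS : PDelta p δ κ₀ κ₁ S) (hp : 1 < p) (hκ₀ : 0 ≤ κ₀)
    (hκ₁ : 0 ≤ κ₁) (hδ : 0 ≤ δ) {A B : Mat3} (hA : msym A = A) (hB : msym B = B)
    (hseg : ∀ θ ∈ Icc (0:ℝ) 1, A + θ • (B - A) ≠ 0) :
    HammerEstimate p δ (hammerLowerConst p κ₀) (hammerUpperConst p κ₁) S A B := by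
  have hD : msym (B - A) = B - A := by rw [msym_sub, hA, hB]
  have hlow := integral_rpow_norm_segment_ge (r := p - 2) hδ (matToEuclidean_segment_ne_zero hseg)
  have hup := integral_rpow_norm_segment_le hδ (matToEuclidean_segment_ne_zero hseg)
    (show -1 < p - 2 by linarith)
  simp only [← map_smul, ← map_add, ← mnorm_eq_norm, neg_sub,
    show p - 2 + 1 = p - 1 by ring] at hlow hup
  have hI₀ := hS.mul_integral_le_mnorm_sub hκ₀ hδ hA hD hseg
  have hI₁ := hS.mnorm_sub_le_mul_integral hκ₁ hδ hA hD hseg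
  rw [add_sub_cancel, mnorm_sub_comm B A, mnorm_sub_comm (S B)] at hI₀ hI₁
  rw [mnorm_sub_comm B A] at hlow hup
  have hm : 0 ≤ min (p - 1) 1 := le_min (by linarith) zero_le_one
  have ht := mnorm_nonneg (A - B)
  rw [HammerEstimate, phiShift'_eq (mnorm_nonneg _) ht]
  constructor
  · calc hammerLowerConst p κ₀ * ((δ + mnorm A + mnorm (A - B)) ^ (p - 2) * mnorm (A - B))
        = κ₀ * min (p - 1) 1 * mnorm (A - B) *
            (min 1 (6 ^ (2 - p) / 4) * (δ + mnorm A + mnorm (A - B)) ^ (p - 2)) := by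
          rw [hammerLowerConst]; ring
      _ ≤ _ := mul_le_mul_of_nonneg_left hlow (by positivity)
      _ ≤ _ := hI₀
  · calc mnorm (S A - S B) ≤ _ := hI₁
      _ ≤ 9 * κ₁ * max (p - 1) 1 * mnorm (A - B) *
            ((1 + 8 / (p - 1)) * (δ + mnorm A + mnorm (A - B)) ^ (p - 2)) :=
          mul_le_mul_of_nonneg_left hup (by have := le_max_right (p - 1) 1; positivity)
      _ = _ := by rw [hammerUpperConst]; ring

theorem hammerEstimate_of_msym (hS : PDelta p δ κ₀ κ₁ S) (hp : 1 < p) (hκ₀ : 0 ≤ κ₀)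
    (hκ₁ : 0 ≤ κ₁) (hδ : 0 ≤ δ) {A B : Mat3} (hA : msym A = A) (hB : msym B = B) :
    HammerEstimate p δ (hammerLowerConst p κ₀) (hammerUpperConst p κ₁) S A B := by
  rcases eq_or_ne A B with rfl | hAB
  · simp [HammerEstimate, mnorm_zero, phiShift']
  by_cases hseg : ∀ θ ∈ Icc (0:ℝ) 1, A + θ • (B - A) ≠ 0
  · exact hS.hammerEstimate_of_segment hp hκ₀ hκ₁ hδ hA hB hseg
  push Not at hseg
  obtain ⟨θ₀, -, hθ₀⟩ := hseg
  obtain ⟨U, hU, hUD⟩ := exists_msym_eq_forall_ne_smul (B - A)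
  refine hammerEstimate_of_shift (U := U) hS.cont hδ hAB fun ε hε => ?_
  refine hS.hammerEstimate_of_segment hp hκ₀ hκ₁ hδ (msym_add_smul hA hU ε)
    (msym_add_smul hB hU ε) fun θ _ h => ?_
  rw [add_sub_add_right_eq_sub] at h
  -- `A = -θ₀ • (B - A)`, so a zero of the shifted segment makes `U` parallel to `B - A`.
  have hεU : ε • U = (θ₀ - θ) • (B - A) := by linear_combination (norm := module) h - hθ₀
  apply hUD ((θ₀ - θ) / ε)
  rw [div_eq_inv_mul, mul_smul, ← hεU, inv_smul_smul₀ hε.ne']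

end PDelta

/-- Hammer estimate: for `S` with `(p,δ)`-structure,
`|S(P) − S(Q)| ∼ φ'_{|P^sym|}(|P^sym − Q^sym|)` with constants depending only on the
characteristics `(κ₀, κ₁, p)` of `S`. -/
theorem hammer_S_diff (p κ₀ κ₁ : ℝ) (hp : 1 < p) (hκ₀ : 0 < κ₀) (hκ₁ : 0 < κ₁) :
    ∃ c C : ℝ, 0 < c ∧ 0 < C ∧ ∀ δ : ℝ, 0 ≤ δ → ∀ S : Mat3 → Mat3,
      PDelta p δ κ₀ κ₁ S → ∀ P Q : Mat3,
        c * phiShift' p δ (mnorm (msym P)) (mnorm (msym P - msym Q)) ≤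
            mnorm (S P - S Q) ∧
        mnorm (S P - S Q) ≤
            C * phiShift' p δ (mnorm (msym P)) (mnorm (msym P - msym Q)) := by
  refine ⟨hammerLowerConst p κ₀, hammerUpperConst p κ₁, hammerLowerConst_pos hp hκ₀,
    hammerUpperConst_pos hp hκ₁, fun δ hδ S hS P Q => ?_⟩
  rw [hS.symdep P, hS.symdep Q]
  exact hS.hammerEstimate_of_msym hp hκ₀.le hκ₁.le hδ (msym_msym P) (msym_msym Q)
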